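/- Sklar's theorem (existence, continuous case): if X_1,...,X_N have joint CDF D and continuous marginal CDFs F_i, then there exists a unique copula C (a joint CDF on [0,1]^N with uniform marginals) such that D(x_1,...,x_N) = C(F_1(x_1),...,F_N(x_N)) for all x. -/

import Mathlib

/-!
If `Y` has a continuous distribution function `F`, the events `{F Y ≤ F s}` and `{Y ≤ s}` differ
by a null set, because `F` is constant on the gap between them. Hence `F Y` is uniform on `[0, 1]`,
and the law of `(F₁ X₁, …, F_N X_N)` is a copula whose distribution function `C₀` satisfies
`D = C₀ ∘ F`.
For uniqueness, every `F i` maps onto `(0, 1)`, so any other such copula agrees with `C₀` on the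
open cube. A copula is determined by these values: uniform marginals give the Lipschitz bound
`|C u - C w| ≤ ∑ i, λ([u i, w i] ∩ [0, 1])`, and clamping `u` into `[ε, 1 - ε]ᴺ` moves `C u`
by at most `2 N ε`.
-/

open MeasureTheory Real Set Filter Topology ProbabilityTheory
open scoped Interval

namespace ProbabilityTheory

lemma cdf_map_apply {Ω : Type*} [MeasurableSpace Ω] {P : Measure Ω} [IsProbabilityMeasure P]
    {Y : Ω → ℝ} (hY : Measurable Y) (t : ℝ) : cdf (P.map Y) t = P.real {ω | Y ω ≤ t} := by
  have := Measure.isProbabilityMeasure_map (μ := P) hY.aemeasurable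
  rw [cdf_eq_real, map_measureReal_apply hY measurableSet_Iic]
  rfl

lemma Ioo_subset_range_cdf {ν : Measure ℝ} (hF : Continuous (cdf ν)) :
    Ioo 0 1 ⊆ range (cdf ν) := fun _ ht =>
  mem_range_of_exists_le_of_exists_ge hF
    (((tendsto_cdf_atBot ν).eventually_lt_const ht.1).exists.imp fun _ => le_of_lt)
    (((tendsto_cdf_atTop ν).eventually_const_lt ht.2).exists.imp fun _ => le_of_lt)

variable {ν : Measure ℝ} [IsProbabilityMeasure ν]

lemma ae_cdf_le_cdf_iff (hF : Continuous (cdf ν)) (s : ℝ) :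
    ∀ᵐ y ∂ν, cdf ν y ≤ cdf ν s ↔ y ≤ s := by
  suffices ν {y | s < y ∧ cdf ν y ≤ cdf ν s} = 0 by
    refine ae_iff.2 (measure_mono_null (fun y (hy : ¬_) => ?_) this)
    exact ⟨lt_of_not_ge fun h => hy (iff_of_true (monotone_cdf ν h) h),
      not_not.1 fun h => hy (iff_of_false h fun h' => h (monotone_cdf ν h'))⟩
  have hmeasure := measure_cdf ν
  by_cases hB : BddAbove {t | cdf ν t ≤ cdf ν s}
  · -- The largest `b` with `cdf ν b = cdf ν s` exists by continuity, and `(s, b]` carries no mass.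
    have hb : cdf ν (sSup {t | cdf ν t ≤ cdf ν s}) ≤ cdf ν s :=
      (isClosed_le hF continuous_const).csSup_mem ⟨s, le_refl (cdf ν s)⟩ hB
    refine measure_mono_null (show _ ⊆ Ioc s _ from fun y hy => ⟨hy.1, le_csSup hB hy.2⟩) ?_
    rw [← hmeasure, StieltjesFunction.measure_Ioc, ENNReal.ofReal_eq_zero, sub_nonpos, hmeasure]
    exact hb
  · have hs : 1 ≤ cdf ν s := le_of_tendsto' (tendsto_cdf_atTop ν) fun t => by
      obtain ⟨t', ht', htt'⟩ := not_bddAbove_iff.1 hB t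
      exact (monotone_cdf ν htt'.le).trans ht'
    refine measure_mono_null (show _ ⊆ Ioi s from fun y hy => hy.1) ?_
    rw [← hmeasure, StieltjesFunction.measure_Ioi _ (tendsto_cdf_atTop _), ENNReal.ofReal_eq_zero,
      sub_nonpos]
    exact hs

theorem map_cdf_eq_restrict_Icc (hF : Continuous (cdf ν)) :
    ν.map (cdf ν) = volume.restrict (Icc 0 1) := by
  refine Measure.ext_of_Iic _ _ fun t => ?_
  have hIcc : Iic t ∩ Icc 0 1 = Icc 0 (min t 1) := by
    ext x; simp only [mem_inter_iff, mem_Iic, mem_Icc, le_min_iff]; tauto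
  rw [Measure.map_apply hF.measurable measurableSet_Iic, Measure.restrict_apply measurableSet_Iic,
    hIcc, volume_Icc, sub_zero]
  by_cases ht : t ∈ range (cdf ν)
  · obtain ⟨s, rfl⟩ := ht
    rw [min_eq_left (cdf_le_one ν s), ofReal_cdf]
    exact measure_congr (eventuallyEq_set.2 (ae_cdf_le_cdf_iff hF s))
  · obtain ht0 | ht1 : t ≤ 0 ∨ 1 ≤ t := by
      by_contra! h
      exact ht (Ioo_subset_range_cdf hF ⟨h.1, h.2⟩)
    · have hempty : cdf ν ⁻¹' Iic t = ∅ := eq_empty_of_forall_notMem fun y (hy : _ ≤ t) =>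
        ht ⟨y, le_antisymm hy (ht0.trans (cdf_nonneg ν y))⟩
      rw [hempty, measure_empty, ENNReal.ofReal_of_nonpos (min_le_of_left_le ht0)]
    · rw [min_eq_right ht1, ENNReal.ofReal_one, ← measure_univ (μ := ν)]
      exact congrArg ν (eq_univ_of_forall fun y => (cdf_le_one ν y).trans ht1)

end ProbabilityTheory

lemma volume_real_uIoc_clamp_inter_Icc_le (a : ℝ) {ε : ℝ} (hε : 0 ≤ ε) :
    volume.real (Ι a (max ε (min a (1 - ε))) ∩ Icc 0 1) ≤ 2 * ε := by
  calc _ ≤ volume.real (Icc 0 ε ∪ Icc (1 - ε) 1) :=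
        measureReal_mono (fun x (hx : x ∈ _ ∩ _) => ?_)
          (isCompact_Icc.union isCompact_Icc).measure_ne_top
    _ ≤ volume.real (Icc 0 ε) + volume.real (Icc (1 - ε) 1) := measureReal_union_le _ _
    _ = 2 * ε := by
      rw [volume_real_Icc_of_le hε, volume_real_Icc_of_le (by linarith)]
      ring
  obtain ⟨hx, hx0, hx1⟩ := hx
  rw [mem_uIoc] at hx
  simp only [mem_union, mem_Icc]
  grind

def HasUniformMarginals {ι : Type*} (μ : Measure (ι → ℝ)) : Prop :=
  ∀ i, μ.map (fun v => v i) = volume.restrict (Icc 0 1)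

namespace HasUniformMarginals

variable {ι : Type*} {μ : Measure (ι → ℝ)}

lemma measure_compl_pi_Icc_eq_zero [Countable ι] (hμ : HasUniformMarginals μ) :
    μ (univ.pi fun _ => Icc 0 1)ᶜ = 0 := by
  have h : ∀ᵐ v ∂μ, ∀ i, v i ∈ Icc (0 : ℝ) 1 := ae_all_iff.2 fun i =>
    ae_of_ae_map (measurable_pi_apply i).aemeasurable (hμ i ▸ ae_restrict_mem measurableSet_Icc)
  exact ae_iff.1 (h.mono fun v hv => mem_univ_pi.2 hv)

lemma measureReal_eval_preimage (hμ : HasUniformMarginals μ) (i : ι) {S : Set ℝ}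
    (hS : MeasurableSet S) : μ.real ((fun v => v i) ⁻¹' S) = volume.real (S ∩ Icc 0 1) := by
  rw [← map_measureReal_apply (measurable_pi_apply i) hS, hμ i, measureReal_restrict_apply hS]

lemma abs_measureReal_Iic_sub_le [Fintype ι] [IsFiniteMeasure μ] (hμ : HasUniformMarginals μ)
    (u w : ι → ℝ) :
    |μ.real (Iic u) - μ.real (Iic w)| ≤ ∑ i, volume.real (Ι (u i) (w i) ∩ Icc 0 1) := by
  have key : ∀ u w : ι → ℝ,
      μ.real (Iic u) ≤ μ.real (Iic w) + ∑ i, volume.real (Ι (u i) (w i) ∩ Icc 0 1) := by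
    intro u w
    have hcover : Iic u ⊆ Iic w ∪ ⋃ i, (fun v => v i) ⁻¹' Ι (u i) (w i) := fun v hv => by
      by_cases hvw : v ≤ w
      · exact Or.inl hvw
      · simp only [Pi.le_def, not_forall, not_le] at hvw
        obtain ⟨i, hi⟩ := hvw
        exact Or.inr (mem_iUnion.2 ⟨i, Ioc_subset_uIoc' ⟨hi, hv i⟩⟩)
    calc μ.real (Iic u) ≤ μ.real (Iic w ∪ ⋃ i, (fun v => v i) ⁻¹' Ι (u i) (w i)) :=
          measureReal_mono hcover
      _ ≤ μ.real (Iic w) + ∑ i, μ.real ((fun v => v i) ⁻¹' Ι (u i) (w i)) :=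
          (measureReal_union_le _ _).trans (add_le_add le_rfl (measureReal_iUnion_fintype_le _))
      _ = _ := by simp_rw [hμ.measureReal_eval_preimage _ measurableSet_uIoc]
  refine abs_sub_le_iff.2 ⟨by linarith [key u w], ?_⟩
  simpa only [uIoc_comm (w _)] using sub_le_iff_le_add'.2 (key w u)

lemma tendsto_measureReal_Iic_clamp [Fintype ι] [IsFiniteMeasure μ] (hμ : HasUniformMarginals μ)
    (u : ι → ℝ) :
    Tendsto (fun ε => μ.real (Iic fun i => max ε (min (u i) (1 - ε)))) (𝓝[>] 0)
      (𝓝 (μ.real (Iic u))) := by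
  refine tendsto_iff_norm_sub_tendsto_zero.2 (squeeze_zero'
    (Eventually.of_forall fun _ => norm_nonneg _)
    (eventually_nhdsWithin_of_forall fun ε (hε : 0 < ε) => ?_)
    (g := fun ε => (2 * Fintype.card ι) * ε) ?_)
  · rw [Real.norm_eq_abs, abs_sub_comm]
    refine (hμ.abs_measureReal_Iic_sub_le _ _).trans ?_
    refine (Finset.sum_le_sum fun i _ =>
      volume_real_uIoc_clamp_inter_Icc_le (u i) hε.le).trans_eq ?_
    rw [Finset.sum_const, Finset.card_univ, nsmul_eq_mul]
    ring
  · exact tendsto_nhdsWithin_of_tendsto_nhds ((continuous_const_mul _).tendsto' 0 0 (mul_zero _))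

theorem measureReal_Iic_eq_of_eqOn_Ioo [Fintype ι] {μ' : Measure (ι → ℝ)} [IsFiniteMeasure μ]
    [IsFiniteMeasure μ'] (hμ : HasUniformMarginals μ) (hμ' : HasUniformMarginals μ')
    (h : ∀ w ∈ univ.pi fun _ => Ioo 0 1, μ.real (Iic w) = μ'.real (Iic w)) (u : ι → ℝ) :
    μ.real (Iic u) = μ'.real (Iic u) :=
  tendsto_nhds_unique_of_eventuallyEq (hμ.tendsto_measureReal_Iic_clamp u)
    (hμ'.tendsto_measureReal_Iic_clamp u) <| eventually_of_mem (Ioo_mem_nhdsGT one_pos)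
      fun ε hε => h _ fun i _ => ⟨lt_max_of_lt_left hε.1,
        max_lt hε.2 ((min_le_right _ _).trans_lt (by linarith [hε.1]))⟩

end HasUniformMarginals

section RandomVector

variable {Ω ι : Type*} [MeasurableSpace Ω] {P : Measure Ω} {X : Ω → ι → ℝ}

noncomputable def copulaMeasure (P : Measure Ω) (X : Ω → ι → ℝ) : Measure (ι → ℝ) :=
  P.map fun ω i => cdf (P.map (X · i)) (X ω i)

lemma measurable_cdf_comp_eval (hX : Measurable X) :
    Measurable fun ω i => cdf (P.map (X · i)) (X ω i) :=
  measurable_pi_iff.2 fun _ => (monotone_cdf _).measurable.comp hX.eval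

variable [IsProbabilityMeasure P]

lemma isProbabilityMeasure_copulaMeasure (hX : Measurable X) :
    IsProbabilityMeasure (copulaMeasure P X) :=
  Measure.isProbabilityMeasure_map (measurable_cdf_comp_eval hX).aemeasurable

lemma hasUniformMarginals_copulaMeasure (hX : Measurable X)
    (hF : ∀ i, Continuous (cdf (P.map (X · i)))) : HasUniformMarginals (copulaMeasure P X) := by
  intro i
  have := Measure.isProbabilityMeasure_map (μ := P) (hX.eval (a := i)).aemeasurable
  rw [copulaMeasure, Measure.map_map (measurable_pi_apply i) (measurable_cdf_comp_eval hX),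
    ← map_cdf_eq_restrict_Icc (hF i), Measure.map_map (monotone_cdf _).measurable hX.eval]
  rfl

lemma measure_forall_le_eq_copulaMeasure_Iic [Countable ι] (hX : Measurable X)
    (hF : ∀ i, Continuous (cdf (P.map (X · i)))) (x : ι → ℝ) :
    P {ω | ∀ i, X ω i ≤ x i} = copulaMeasure P X (Iic fun i => cdf (P.map (X · i)) (x i)) := by
  rw [copulaMeasure, Measure.map_apply (measurable_cdf_comp_eval hX) measurableSet_Iic]
  refine measure_congr (eventuallyEq_set.2 ?_)
  have : ∀ i, IsProbabilityMeasure (P.map (X · i)) := fun i =>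
    Measure.isProbabilityMeasure_map hX.eval.aemeasurable
  filter_upwards [ae_all_iff.2 fun i =>
    ae_of_ae_map hX.eval.aemeasurable (ae_cdf_le_cdf_iff (hF i) (x i))] with ω hω
  exact forall_congr' fun i => (hω i).symm

end RandomVector

/-- **Sklar's theorem (existence and uniqueness, continuous case).** If
`X_1, ..., X_N` have joint CDF `D` and continuous marginal CDFs `F i`, then
there exists a unique copula `C` — the CDF of a probability measure on `[0,1]^N`
with all one-dimensional marginals uniform on `[0,1]` — such that
`D(x) = C(F_1(x_1), ..., F_N(x_N))` for all `x`. -/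
theorem sklar_continuous
    {N : ℕ} {Ω : Type*} [MeasureSpace Ω] [IsProbabilityMeasure (volume : Measure Ω)]
    (X : Ω → (Fin N → ℝ)) (hX : Measurable X)
    (D : (Fin N → ℝ) → ℝ) (F : Fin N → ℝ → ℝ)
    -- `D` is the joint CDF of `X`
    (hD : ∀ x, D x = ((volume : Measure Ω) {ω | ∀ i, X ω i ≤ x i}).toReal)
    -- `F i` is the marginal CDF of `X_i`, continuous
    (hF : ∀ i t, F i t = ((volume : Measure Ω) {ω | X ω i ≤ t}).toReal)
    (hFcont : ∀ i, Continuous (F i)) :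
    ∃! C : (Fin N → ℝ) → ℝ,
      (∃ μ : Measure (Fin N → ℝ), IsProbabilityMeasure μ
        ∧ μ (Set.univ.pi fun _ : Fin N => Set.Icc (0:ℝ) 1)ᶜ = 0
        ∧ (∀ i, Measure.map (fun u => u i) μ = volume.restrict (Set.Icc (0:ℝ) 1))
        ∧ ∀ u, C u = (μ {v | ∀ i, v i ≤ u i}).toReal)
      ∧ ∀ x, D x = C (fun i => F i (x i)) := by
  obtain rfl : F = fun i => ⇑(cdf (volume.map (X · i))) :=
    funext₂ fun i t => by rw [hF, cdf_map_apply hX.eval]; rfl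
  set μ₀ := copulaMeasure volume X
  have := isProbabilityMeasure_copulaMeasure (P := volume) hX
  have hμ₀ : HasUniformMarginals μ₀ := hasUniformMarginals_copulaMeasure hX hFcont
  have hD₀ : ∀ x, D x = μ₀.real (Iic fun i => cdf (volume.map (X · i)) (x i)) := fun x => by
    rw [hD, measure_forall_le_eq_copulaMeasure_Iic hX hFcont]
    rfl
  refine ⟨fun u => μ₀.real (Iic u),
    ⟨⟨μ₀, inferInstance, hμ₀.measure_compl_pi_Icc_eq_zero, hμ₀, fun u => rfl⟩, hD₀⟩, ?_⟩
  rintro C ⟨⟨μ, hμP, -, hμ, hC⟩, hDC⟩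
  obtain rfl : C = fun u => μ.real (Iic u) := funext hC
  funext u
  refine HasUniformMarginals.measureReal_Iic_eq_of_eqOn_Ioo hμ hμ₀ (fun w hw => ?_) u
  choose x hx using fun i => Ioo_subset_range_cdf (hFcont i) (hw i (mem_univ i))
  obtain rfl : (fun i => cdf (volume.map (X · i)) (x i)) = w := funext hx
  exact (hDC x).symm.trans (hD₀ x)
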